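/- Let c ∈ ℂ be nonzero, let ℓ ≥ 1, and let v₁, …, v_{ℓ−1}, v, u₁, …, u_ℓ ∈ ℂ be such that the full list of these ℓ + ℓ parameters is admissible (pairwise distinct entries with x − y + c ≠ 0 for distinct entries x, y). Then the Izergin kernel satisfies the pole-development recursion: K_ℓ((v₁,…,v_{ℓ−1},v) | (u₁,…,u_ℓ)) = Σ_{i=1}^{ℓ} g(v,uᵢ)·(∏_{j=1}^{ℓ−1} f(vⱼ,uᵢ))·(∏_{k≠i} f(uᵢ,uₖ))·K_{ℓ−1}((v₁,…,v_{ℓ−1}) | (u₁,…,û_i,…,u_ℓ)), where (u₁,…,ûᵢ,…,u_ℓ) denotes the list with uᵢ removed. -/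

import Mathlib

/-!
Regard the kernel as a function of its last parameter `x = v`. Expanding the Izergin determinant
along its last row and clearing the denominators `(x - uₖ)(x - uₖ + c)` of that row gives a
polynomial `P` of degree `≤ 2(ℓ - 1)`. It vanishes at `x = vⱼ` (two equal rows), and at `x = uᵢ`
only the `i`-th cofactor survives. Lagrange interpolation on the `2ℓ - 1` nodes
`v₁, …, v_{ℓ-1}, u₁, …, u_ℓ` therefore writes `P(v)` through the values `P(uᵢ)`, and the
prefactors of the kernel turn the `i`-th term into the `i`-th summand of the recursion.
-/

open scoped BigOperators
open MulOpposite

noncomputable section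

namespace Bethe

variable {A : Type*} [Ring A] [Algebra ℂ A]

/-- `g(u,v) = c/(u-v)` -/
def gg (c u v : ℂ) : ℂ := c / (u - v)

/-- `f(u,v) = (u-v+c)/(u-v)` -/
def ff (c u v : ℂ) : ℂ := (u - v + c) / (u - v)

/-- `h(u,v) = (u-v+c)/c` -/
def hh (c u v : ℂ) : ℂ := (u - v + c) / c

/-- A list of parameters is admissible if its entries are pairwise distinct and
`x - y + c ≠ 0` for any two distinct entries `x`, `y`. -/
def Admissible (c : ℂ) (l : List ℂ) : Prop :=
  l.Pairwise fun x y => x ≠ y ∧ x - y + c ≠ 0 ∧ y - x + c ≠ 0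

/-- `∏_{x ∈ xs} ∏_{y ∈ ys} f(x,y)` -/
def prodFF (c : ℂ) (xs ys : List ℂ) : ℂ :=
  (xs.map fun x => (ys.map fun y => ff c x y).prod).prod

/-- `∏_{x ∈ xs} ∏_{y ∈ ys} g(x,y)` -/
def prodGG (c : ℂ) (xs ys : List ℂ) : ℂ :=
  (xs.map fun x => (ys.map fun y => gg c x y).prod).prod

/-- `∏_{x ∈ xs} ∏_{y ∈ ys} h(x,y)` -/
def prodHH (c : ℂ) (xs ys : List ℂ) : ℂ :=
  (xs.map fun x => (ys.map fun y => hh c x y).prod).prod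

/-- `H(w̄) = ∏_{j>k} h(wⱼ,wₖ)` -/
def Hnorm (c : ℂ) : List ℂ → ℂ
  | [] => 1
  | x :: xs => ((xs.map fun y => hh c y x).prod) * Hnorm c xs

/-- `H(w̄*) = ∏_{j<k} h(wⱼ,wₖ)` -/
def HnormRev (c : ℂ) : List ℂ → ℂ
  | [] => 1
  | x :: xs => ((xs.map fun y => hh c x y).prod) * HnormRev c xs

/-- product of `h` over ordered pairs of distinct positions of a list -/
def prodHHne (c : ℂ) (xs : List ℂ) : ℂ :=
  ∏ j : Fin xs.length, ∏ k : Fin xs.length,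
    if j ≠ k then hh c (xs.get j) (xs.get k) else 1

/-- ordered product `T(w₁)⋯T(wₙ)` -/
def Tprod (Tij : ℂ → A) (l : List ℂ) : A := (l.map Tij).prod

/-- normalized ordered product `H(w̄)⁻¹ T(w₁)⋯T(wₙ)` -/
def TT (c : ℂ) (Tij : ℂ → A) (l : List ℂ) : A := (Hnorm c l)⁻¹ • Tprod Tij l

/-- normalized ordered product `H(w̄*)⁻¹ T(w₁)⋯T(wₙ)` -/
def TTrev (c : ℂ) (Tij : ℂ → A) (l : List ℂ) : A := (HnormRev c l)⁻¹ • Tprod Tij l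

/-- The defining (RTT) commutation relations of a super-Yangian `T`-family with
`ℤ₂`-grading `p`. -/
def IsTFam (c : ℂ) {N : ℕ} (p : Fin N → ℕ) (T : Fin N → Fin N → ℂ → A) : Prop :=
  ∀ i j k l : Fin N, ∀ z w : ℂ, z ≠ w →
    T i j z * T k l w - ((-1 : ℂ) ^ ((p i + p j) * (p k + p l))) • (T k l w * T i j z)
      = ((-1 : ℂ) ^ (p l * (p i + p j) + p i * p j) * gg c z w) •
          (T i l z * T k j w - T i l w * T k j z)

/-- the distinguished grading of `gl(2|1)`: `[1]=[2]=0`, `[3]=1` -/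
def p21 : Fin 3 → ℕ := ![0, 0, 1]

/-- the distinguished grading of `gl(1|2)`: `[1]=0`, `[2]=[3]=1` -/
def p12 : Fin 3 → ℕ := ![0, 1, 1]

/-- the sublist of `l` given by the positions in `S`, in the inherited order -/
def sel (l : List ℂ) (S : Finset (Fin l.length)) : List ℂ :=
  (S.sort (· ≤ ·)).map l.get

/-- `λ(w̄) = ∏ⱼ λ(wⱼ)` -/
def lamP (lam2 : ℂ → ℂ) (l : List ℂ) : ℂ := (l.map lam2).prod

/-- The Izergin kernel `K_ℓ(v̄|ū)`. -/
def Kiz (c : ℂ) {ℓ : ℕ} (vs us : Fin ℓ → ℂ) : ℂ :=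
  (∏ j : Fin ℓ, ∏ k : Fin ℓ, if (k : ℕ) < (j : ℕ) then gg c (vs j) (vs k) else 1) *
    (∏ j : Fin ℓ, ∏ k : Fin ℓ, if (k : ℕ) < (j : ℕ) then gg c (us k) (us j) else 1) *
    (∏ j : Fin ℓ, ∏ k : Fin ℓ, hh c (vs j) (us k)) *
    Matrix.det (Matrix.of fun j k => gg c (vs j) (us k) / hh c (vs j) (us k))

/-- The Izergin kernel for lists of equal length (and junk value `0` otherwise). -/
def KizL (c : ℂ) (vs us : List ℂ) : ℂ :=
  if h : vs.length = us.length then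
    Kiz c vs.get fun j => us.get (Fin.cast h j)
  else 0

/-- The operator `X_{a,b}(ū,v̄)` of the paper (`Y(2|1)` case). -/
def X (c : ℂ) (T : Fin 3 → Fin 3 → ℂ → A) (u v : List ℂ) : A :=
  ∑ S : Finset (Fin u.length), ∑ Q : Finset (Fin v.length),
    if S.card = Q.card then
      (prodGG c (sel v Q) (sel u S) * prodFF c (sel u S) (sel u Sᶜ) *
          prodGG c (sel v Qᶜ) (sel v Q) * prodHHne c (sel u S)) •
        (TT c (T 0 2) (sel u S) * Tprod (T 0 1) (sel u Sᶜ) *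
          TT c (T 1 2) (sel v Qᶜ) * Tprod (T 1 1) (sel v Q))
    else 0

/-- The operator `Y_{a,b}(ū,v̄)` of the paper (`Y(2|1)` case). -/
def Y (c : ℂ) (T : Fin 3 → Fin 3 → ℂ → A) (u v : List ℂ) : A :=
  ∑ S : Finset (Fin u.length), ∑ Q : Finset (Fin v.length),
    if S.card = Q.card then
      (KizL c (sel v Q) (sel u S) * prodFF c (sel u S) (sel u Sᶜ) *
          prodGG c (sel v Qᶜ) (sel v Q)) •
        (TT c (T 0 2) (sel v Q) * TT c (T 1 2) (sel v Qᶜ) *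
          Tprod (T 0 1) (sel u Sᶜ) * Tprod (T 1 1) (sel u S))
    else 0

/-- First explicit expression for the `Y(2|1)` Bethe vector (operator part,
the weights `λ₂` included as scalars). -/
def PhiA (c : ℂ) (T : Fin 3 → Fin 3 → ℂ → A) (lam2 : ℂ → ℂ) (u v : List ℂ) : A :=
  ∑ S : Finset (Fin u.length), ∑ Q : Finset (Fin v.length),
    if S.card = Q.card then
      (prodGG c (sel v Q) (sel u S) * prodFF c (sel u S) (sel u Sᶜ) *
          prodGG c (sel v Qᶜ) (sel v Q) * prodHHne c (sel u S) * lamP lam2 (sel v Q)) •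
        (TT c (T 0 2) (sel u S) * Tprod (T 0 1) (sel u Sᶜ) * TT c (T 1 2) (sel v Qᶜ))
    else 0

/-- Second explicit expression for the `Y(2|1)` Bethe vector (operator part). -/
def PhiB (c : ℂ) (T : Fin 3 → Fin 3 → ℂ → A) (lam2 : ℂ → ℂ) (u v : List ℂ) : A :=
  ∑ S : Finset (Fin u.length), ∑ Q : Finset (Fin v.length),
    if S.card = Q.card then
      (KizL c (sel v Q) (sel u S) * prodFF c (sel u S) (sel u Sᶜ) *
          prodGG c (sel v Qᶜ) (sel v Q) * lamP lam2 (sel u S)) •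
        (TT c (T 0 2) (sel v Q) * TT c (T 1 2) (sel v Qᶜ) * Tprod (T 0 1) (sel u Sᶜ))
    else 0

/-- First explicit expression for the `Y(1|2)` Bethe vector, without the overall
sign `(-1)^b` (operator part). -/
def PhiTA (c : ℂ) (T : Fin 3 → Fin 3 → ℂ → A) (lam2 : ℂ → ℂ) (u v : List ℂ) : A :=
  ∑ S : Finset (Fin u.length), ∑ Q : Finset (Fin v.length),
    if S.card = Q.card then
      (prodGG c (sel u S) (sel v Q) * prodFF c (sel v Q) (sel v Qᶜ) *
          prodGG c (sel u Sᶜ) (sel u S) * prodHHne c (sel v Q) * lamP lam2 (sel u S)) •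
        (TT c (T 0 2) (sel v Q) * Tprod (T 1 2) (sel v Qᶜ) * TT c (T 0 1) (sel u Sᶜ))
    else 0

/-- Second explicit expression for the `Y(1|2)` Bethe vector, without the overall
sign `(-1)^b` (operator part). -/
def PhiTB (c : ℂ) (T : Fin 3 → Fin 3 → ℂ → A) (lam2 : ℂ → ℂ) (u v : List ℂ) : A :=
  ∑ S : Finset (Fin u.length), ∑ Q : Finset (Fin v.length),
    if S.card = Q.card then
      (KizL c (sel u S) (sel v Q) * prodFF c (sel v Q) (sel v Qᶜ) *
          prodGG c (sel u Sᶜ) (sel u S) * lamP lam2 (sel v Q)) •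
        (TT c (T 0 2) (sel u S) * TT c (T 0 1) (sel u Sᶜ) * Tprod (T 1 2) (sel v Qᶜ))
    else 0

/-- First explicit expression for the dual `Y(2|1)` Bethe vector, without the
overall sign `(-1)^{b(b-1)/2}`.  `E` is a right `A`-module, i.e. a left
`Aᵐᵒᵖ`-module; `op X • Ωd` is `Ωd · X`. -/
def PsiA {E : Type*} [AddCommGroup E] [Module ℂ E] [Module Aᵐᵒᵖ E]
    (c : ℂ) (T : Fin 3 → Fin 3 → ℂ → A) (lam2 : ℂ → ℂ) (u v : List ℂ) (Ωd : E) : E :=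
  ∑ S : Finset (Fin u.length), ∑ Q : Finset (Fin v.length),
    if S.card = Q.card then
      (prodGG c (sel v Q) (sel u S) * prodFF c (sel u S) (sel u Sᶜ) *
          prodGG c (sel v Qᶜ) (sel v Q) * prodHHne c (sel u S) * lamP lam2 (sel v Q)) •
        (op (TTrev c (T 2 1) (sel v Qᶜ) * Tprod (T 1 0) (sel u Sᶜ) *
              TTrev c (T 2 0) (sel u S)) • Ωd)
    else 0

/-- The dual `Y(2|1)` Bethe vector `Ψ_{a,b}(ū,v̄)`. -/
def Psi {E : Type*} [AddCommGroup E] [Module ℂ E] [Module Aᵐᵒᵖ E]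
    (c : ℂ) (T : Fin 3 → Fin 3 → ℂ → A) (lam2 : ℂ → ℂ) (u v : List ℂ) (Ωd : E) : E :=
  ((-1 : ℂ) ^ (v.length * (v.length - 1) / 2)) • PsiA c T lam2 u v Ωd

/-- Second explicit expression for the dual `Y(2|1)` Bethe vector, without the
overall sign `(-1)^{b(b-1)/2}`. -/
def PsiB {E : Type*} [AddCommGroup E] [Module ℂ E] [Module Aᵐᵒᵖ E]
    (c : ℂ) (T : Fin 3 → Fin 3 → ℂ → A) (lam2 : ℂ → ℂ) (u v : List ℂ) (Ωd : E) : E :=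
  ∑ S : Finset (Fin u.length), ∑ Q : Finset (Fin v.length),
    if S.card = Q.card then
      (KizL c (sel v Q) (sel u S) * prodFF c (sel u S) (sel u Sᶜ) *
          prodGG c (sel v Qᶜ) (sel v Q) * lamP lam2 (sel u S)) •
        (op (Tprod (T 1 0) (sel u Sᶜ) * TTrev c (T 2 1) (sel v Qᶜ) *
              TTrev c (T 2 0) (sel v Q)) • Ωd)
    else 0

end Bethe

open Polynomial Finset

theorem Finset.prod_univ_erase_inr {M ι : Type*} [CommMonoid M] [Fintype ι] [DecidableEq ι]
    {m : ℕ} (f : ι ⊕ Fin (m + 1) → M) (i : Fin (m + 1)) :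
    ∏ k ∈ univ.erase (Sum.inr i), f k =
      (∏ t, f (Sum.inl t)) * ∏ j, f (Sum.inr (i.succAbove j)) := by
  rw [← filter_ne', prod_filter, Fintype.prod_sum_type, Fin.prod_univ_succAbove _ i]
  simp [Fin.succAbove_ne]

theorem Lagrange.eval_eq_sum_of_eval_eq_zero {F ι : Type*} [Field F] [Fintype ι] {m : ℕ}
    {a : ι → F} {b : Fin (m + 1) → F} (hab : Function.Injective (Sum.elim a b))
    {P : F[X]} (hP : P.natDegree ≤ Fintype.card ι + m) (hPa : ∀ t, P.eval (a t) = 0) (x : F) :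
    P.eval x = ∑ i, P.eval (b i) * (∏ t, (x - a t) / (b i - a t)) *
      ∏ j, (x - b (i.succAbove j)) / (b i - b (i.succAbove j)) := by
  classical
  have hdeg : P.degree < (univ : Finset (ι ⊕ Fin (m + 1))).card := by
    refine degree_le_natDegree.trans_lt ?_
    simp only [card_univ, Fintype.card_sum, Fintype.card_fin]
    exact_mod_cast Nat.lt_succ_of_le hP
  conv_lhs => rw [Lagrange.eq_interpolate hab.injOn hdeg]
  simp [Lagrange.interpolate_apply, eval_finsetSum, hPa, Lagrange.basis, eval_prod,
    prod_univ_erase_inr, Lagrange.basisDivisor, div_eq_inv_mul, mul_assoc]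

theorem Fin.prod_ite_succAbove_lt {M : Type*} [CommMonoid M] {m : ℕ} (a : M) (i : Fin (m + 1)) :
    (∏ j : Fin m, if i.succAbove j < i then a else 1) = a ^ (i : ℕ) := by
  simp_rw [Fin.succAbove_lt_iff_castSucc_lt, Fin.lt_def, Fin.val_castSucc]
  rw [prod_ite, Finset.prod_const, prod_const_one, mul_one, Fin.card_filter_val_lt,
    min_eq_right (Nat.lt_succ_iff.mp i.isLt)]

namespace Bethe

def lowerProd {M : Type*} [CommMonoid M] {n : ℕ} (F : Fin n → Fin n → M) : M :=
  ∏ j : Fin n, ∏ k : Fin n, if (k : ℕ) < (j : ℕ) then F j k else 1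

theorem lowerProd_succAbove {M : Type*} [CommMonoid M] {m : ℕ}
    (F : Fin (m + 1) → Fin (m + 1) → M) (i : Fin (m + 1)) :
    lowerProd F = (∏ j : Fin m, (if i < i.succAbove j then F (i.succAbove j) i else 1) *
        (if i.succAbove j < i then F i (i.succAbove j) else 1)) *
      lowerProd fun j k => F (i.succAbove j) (i.succAbove k) := by
  simp only [lowerProd, Fin.val_fin_lt]
  rw [Fin.prod_univ_succAbove _ i]
  simp_rw [Fin.prod_univ_succAbove (fun k => if k < _ then _ else _) i,
    Fin.succAbove_lt_succAbove_iff, lt_irrefl, if_false, one_mul, prod_mul_distrib]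
  ac_rfl

theorem lowerProd_snoc {M : Type*} [CommMonoid M] {m : ℕ} (F : Fin (m + 1) → Fin (m + 1) → M) :
    lowerProd F = (∏ j : Fin m, F (Fin.last m) j.castSucc) *
      lowerProd fun j k => F j.castSucc k.castSucc := by
  simpa [Fin.castSucc_lt_last, not_lt_of_gt (Fin.castSucc_lt_last _)] using
    lowerProd_succAbove F (Fin.last m)

theorem gg_swap (c u w : ℂ) : gg c w u = -gg c u w := by
  simp only [gg, ← neg_sub u w, div_neg]

theorem lowerProd_gg_succAbove (c : ℂ) {m : ℕ} (us : Fin (m + 1) → ℂ) (i : Fin (m + 1)) :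
    lowerProd (fun j k => gg c (us k) (us j)) =
      (-1) ^ (i : ℕ) * (∏ j : Fin m, gg c (us i) (us (i.succAbove j))) *
        lowerProd fun j k => gg c (us (i.succAbove k)) (us (i.succAbove j)) := by
  rw [lowerProd_succAbove _ i, ← Fin.prod_ite_succAbove_lt (-1) i, ← prod_mul_distrib]
  congr 2
  funext j
  rcases (Fin.succAbove_ne i j).lt_or_gt with h | h
  · simp [h, h.not_gt, gg_swap c (us i)]
  · simp [h, h.not_gt]

def izerginMatrix (c : ℂ) {ℓ : ℕ} (vs us : Fin ℓ → ℂ) : Matrix (Fin ℓ) (Fin ℓ) ℂ :=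
  Matrix.of fun j k => gg c (vs j) (us k) / hh c (vs j) (us k)

def kizPrefactor (c : ℂ) {ℓ : ℕ} (vs us : Fin ℓ → ℂ) : ℂ :=
  lowerProd (fun j k => gg c (vs j) (vs k)) * lowerProd (fun j k => gg c (us k) (us j)) *
    ∏ j, ∏ k, hh c (vs j) (us k)

theorem Kiz_eq (c : ℂ) {ℓ : ℕ} (vs us : Fin ℓ → ℂ) :
    Kiz c vs us = kizPrefactor c vs us * (izerginMatrix c vs us).det := rfl

theorem kizPrefactor_snoc (c : ℂ) {m : ℕ} (vs : Fin m → ℂ) (v : ℂ) (us : Fin (m + 1) → ℂ)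
    (i : Fin (m + 1)) :
    kizPrefactor c (Fin.snoc vs v) us =
      (-1) ^ (i : ℕ) * (∏ t, gg c v (vs t)) * (∏ j, gg c (us i) (us (i.succAbove j))) *
        (∏ t, hh c (vs t) (us i)) * (∏ k, hh c v (us k)) *
        kizPrefactor c vs fun j => us (i.succAbove j) := by
  have hH : ∏ t, ∏ k, hh c (vs t) (us k) =
      (∏ t, hh c (vs t) (us i)) * ∏ t, ∏ j, hh c (vs t) (us (i.succAbove j)) := by
    simp_rw [Fin.prod_univ_succAbove _ i, prod_mul_distrib]
  rw [kizPrefactor, kizPrefactor, lowerProd_snoc, lowerProd_gg_succAbove c us i,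
    Fin.prod_univ_castSucc]
  simp only [Fin.snoc_castSucc, Fin.snoc_last]
  rw [hH]
  ring

theorem gg_div_hh (c x u : ℂ) : gg c x u / hh c x u = c ^ 2 / ((x - u) * (x - u + c)) := by
  rw [gg, hh, div_div_div_eq, sq]

theorem det_izerginMatrix_snoc (c : ℂ) {m : ℕ} (vs : Fin m → ℂ) (x : ℂ) (us : Fin (m + 1) → ℂ) :
    (izerginMatrix c (Fin.snoc vs x) us).det = ∑ k : Fin (m + 1), (-1) ^ (m + k : ℕ) *
      (gg c x (us k) / hh c x (us k)) * (izerginMatrix c vs fun j => us (k.succAbove j)).det := by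
  rw [Matrix.det_succ_row _ (Fin.last m)]
  simp [izerginMatrix, Matrix.submatrix, Fin.succAbove_last]

theorem det_izerginMatrix_snoc_self (c : ℂ) {m : ℕ} (vs : Fin m → ℂ) (t : Fin m)
    (us : Fin (m + 1) → ℂ) : (izerginMatrix c (Fin.snoc vs (vs t)) us).det = 0 :=
  Matrix.det_zero_of_row_eq (Fin.castSucc_lt_last t).ne (by ext k; simp [izerginMatrix])

/-- `∏ₖ (x - uₖ) (x - uₖ + c) · det (izerginMatrix c (Fin.snoc vs x) us)` as a polynomial in `x`:
the Laplace expansion along the last row, whose entries are `c² / ((x - uₖ) (x - uₖ + c))`. -/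
def izerginPoly (c : ℂ) {m : ℕ} (vs : Fin m → ℂ) (us : Fin (m + 1) → ℂ) : ℂ[X] :=
  ∑ k : Fin (m + 1),
    C ((-1) ^ (m + k : ℕ) * c ^ 2 * (izerginMatrix c vs fun j => us (k.succAbove j)).det) *
    ∏ j, (Polynomial.X - C (us (k.succAbove j))) * (Polynomial.X - C (us (k.succAbove j)) + C c)

theorem natDegree_izerginPoly_le (c : ℂ) {m : ℕ} (vs : Fin m → ℂ) (us : Fin (m + 1) → ℂ) :
    (izerginPoly c vs us).natDegree ≤ 2 * m := by
  refine natDegree_sum_le_of_forall_le _ _ fun k _ => (natDegree_C_mul_le _ _).trans ?_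
  have hquad (u : ℂ) : ((Polynomial.X - C u) * (Polynomial.X - C u + C c)).natDegree ≤ 2 :=
    natDegree_mul_le.trans (by rw [natDegree_add_C, natDegree_X_sub_C])
  refine (natDegree_prod_le _ _).trans ((sum_le_sum fun j _ => hquad _).trans ?_)
  simp [mul_comm]

theorem eval_izerginPoly (c : ℂ) {m : ℕ} (vs : Fin m → ℂ) (us : Fin (m + 1) → ℂ) {x : ℂ}
    (hx : ∀ k, x - us k ≠ 0 ∧ x - us k + c ≠ 0) :
    (izerginPoly c vs us).eval x =
      (∏ k, (x - us k) * (x - us k + c)) * (izerginMatrix c (Fin.snoc vs x) us).det := by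
  rw [det_izerginMatrix_snoc, mul_sum]
  simp only [izerginPoly, eval_finsetSum, eval_mul, eval_C, eval_prod, eval_add, eval_sub, eval_X]
  refine sum_congr rfl fun k _ => ?_
  obtain ⟨hx₁, hx₂⟩ := hx k
  rw [Fin.prod_univ_succAbove _ k, gg_div_hh]
  field_simp

theorem eval_izerginPoly_self (c : ℂ) {m : ℕ} (vs : Fin m → ℂ) (us : Fin (m + 1) → ℂ)
    (i : Fin (m + 1)) :
    (izerginPoly c vs us).eval (us i) =
      (-1) ^ (m + i : ℕ) * c ^ 2 * (izerginMatrix c vs fun j => us (i.succAbove j)).det *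
        ∏ j, (us i - us (i.succAbove j)) * (us i - us (i.succAbove j) + c) := by
  simp only [izerginPoly, eval_finsetSum, eval_mul, eval_C, eval_prod, eval_add, eval_sub, eval_X]
  refine sum_eq_single i (fun k _ hki => ?_) (by simp)
  obtain ⟨j, hj⟩ := Fin.exists_succAbove_eq (Ne.symm hki)
  exact mul_eq_zero_of_right _ (prod_eq_zero (mem_univ j) (by simp [hj]))

theorem prod_lagrange_weight_left {c : ℂ} (hc : c ≠ 0) {ι : Type*} [Fintype ι] {ws : ι → ℂ}
    {u v : ℂ} (hvws : ∀ t, v ≠ ws t) (hwsu : ∀ t, ws t ≠ u) :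
    (∏ t, gg c v (ws t)) * (∏ t, hh c (ws t) u) * (∏ t, (v - ws t) / (u - ws t)) =
      ∏ t, -ff c (ws t) u := by
  rw [← prod_mul_distrib, ← prod_mul_distrib]
  refine prod_congr rfl fun t _ => ?_
  have h₁ := sub_ne_zero.mpr (hvws t)
  have h₂ := sub_ne_zero.mpr (hwsu t)
  have h₃ := sub_ne_zero.mpr (hwsu t).symm
  simp only [gg, hh, ff]
  field_simp
  ring

theorem prod_lagrange_weight_right {c : ℂ} (hc : c ≠ 0) {ι : Type*} [Fintype ι] {ws : ι → ℂ}
    {u v : ℂ} (huws : ∀ j, u ≠ ws j) (hvws : ∀ j, v - ws j ≠ 0 ∧ v - ws j + c ≠ 0) :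
    (∏ j, gg c u (ws j)) * (∏ j, (u - ws j) * (u - ws j + c)) * (∏ j, (v - ws j) / (u - ws j)) *
        ((∏ j, hh c v (ws j)) / ∏ j, (v - ws j) * (v - ws j + c)) =
      ∏ j, ff c u (ws j) := by
  rw [← prod_div_distrib, ← prod_mul_distrib, ← prod_mul_distrib, ← prod_mul_distrib]
  refine prod_congr rfl fun j _ => ?_
  have h₁ := sub_ne_zero.mpr (huws j)
  obtain ⟨h₂, h₃⟩ := hvws j
  simp only [gg, hh, ff]
  field_simp

theorem sq_mul_hh_div {c v u : ℂ} (hc : c ≠ 0) (hvu : v - u ≠ 0) (hvuc : v - u + c ≠ 0) :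
    c ^ 2 * (hh c v u / ((v - u) * (v - u + c))) = gg c v u := by
  simp only [gg, hh]
  field_simp

theorem izergin_lagrange_term_eq {c : ℂ} (hc : c ≠ 0) {m : ℕ} {vs : Fin m → ℂ} {v : ℂ}
    {us : Fin (m + 1) → ℂ} (i : Fin (m + 1)) (hvvs : ∀ t, v ≠ vs t) (hvsu : ∀ t, vs t ≠ us i)
    (hus : Function.Injective us) (hvu : ∀ k, v - us k ≠ 0 ∧ v - us k + c ≠ 0) :
    kizPrefactor c (Fin.snoc vs v) us *
        ((izerginPoly c vs us).eval (us i) * (∏ t, (v - vs t) / (us i - vs t)) *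
            (∏ j, (v - us (i.succAbove j)) / (us i - us (i.succAbove j))) /
          ∏ k, (v - us k) * (v - us k + c)) =
      gg c v (us i) * (∏ j : Fin m, ff c (vs j) (us i)) *
        (∏ k : Fin (m + 1), if k ≠ i then ff c (us i) (us k) else 1) *
        Kiz c vs (fun k => us (i.succAbove k)) := by
  have hff : (∏ k, if k ≠ i then ff c (us i) (us k) else 1) =
      ∏ j, ff c (us i) (us (i.succAbove j)) := by
    rw [Fin.prod_univ_succAbove _ i]
    simp [Fin.succAbove_ne]
  have hsign : (-1 : ℂ) ^ (i : ℕ) * (-1) ^ (m + i : ℕ) * (-1) ^ m = 1 := by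
    rw [← pow_add, ← pow_add]
    exact Even.neg_one_pow ⟨m + i, by ring⟩
  rw [kizPrefactor_snoc c vs v us i, eval_izerginPoly_self, hff,
    Fin.prod_univ_succAbove (fun k => hh c v (us k)) i,
    Fin.prod_univ_succAbove (fun k => (v - us k) * (v - us k + c)) i, div_mul_eq_div_div]
  calc _ = (-1) ^ (i : ℕ) * (-1) ^ (m + i : ℕ) *
        ((∏ t, gg c v (vs t)) * (∏ t, hh c (vs t) (us i)) * (∏ t, (v - vs t) / (us i - vs t))) *
        ((∏ j, gg c (us i) (us (i.succAbove j))) *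
          (∏ j, (us i - us (i.succAbove j)) * (us i - us (i.succAbove j) + c)) *
          (∏ j, (v - us (i.succAbove j)) / (us i - us (i.succAbove j))) *
          ((∏ j, hh c v (us (i.succAbove j))) /
            ∏ j, (v - us (i.succAbove j)) * (v - us (i.succAbove j) + c))) *
        (c ^ 2 * (hh c v (us i) / ((v - us i) * (v - us i + c)))) *
        Kiz c vs (fun k => us (i.succAbove k)) := by
          rw [Kiz_eq]
          ring
    _ = _ := by
      rw [prod_lagrange_weight_left hc hvvs hvsu,
        prod_lagrange_weight_right hc (fun j => hus.ne (Fin.succAbove_ne i j).symm) fun j => hvu _,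
        sq_mul_hh_div hc (hvu i).1 (hvu i).2, prod_neg, card_univ, Fintype.card_fin]
      linear_combination (gg c v (us i) * (∏ j, ff c (vs j) (us i)) *
        (∏ j, ff c (us i) (us (i.succAbove j))) * Kiz c vs (fun k => us (i.succAbove k))) * hsign

theorem Admissible.of_append_ofFn {c : ℂ} {n k : ℕ} {a : Fin n → ℂ} {b : Fin k → ℂ}
    (h : Admissible c (List.ofFn a ++ List.ofFn b)) :
    Function.Injective a ∧ Function.Injective b ∧ ∀ i j, a i - b j ≠ 0 ∧ a i - b j + c ≠ 0 := by
  rw [Admissible, List.pairwise_append] at h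
  obtain ⟨ha, hb, hab⟩ := h
  refine ⟨List.nodup_ofFn.mp (ha.imp (·.1)), List.nodup_ofFn.mp (hb.imp (·.1)), fun i j => ?_⟩
  obtain ⟨hne, hc, -⟩ := hab _ (List.mem_ofFn.mpr ⟨i, rfl⟩) _ (List.mem_ofFn.mpr ⟨j, rfl⟩)
  exact ⟨sub_ne_zero.mpr hne, hc⟩

/-- pole-development recursion of the Izergin kernel. -/
theorem statement19 (c : ℂ) (hc : c ≠ 0) (m : ℕ)
    (vs : Fin m → ℂ) (v : ℂ) (us : Fin (m + 1) → ℂ)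
    (hadm : Admissible c (List.ofFn (Fin.snoc vs v : Fin (m + 1) → ℂ) ++ List.ofFn us)) :
    Kiz c (Fin.snoc vs v : Fin (m + 1) → ℂ) us
      = ∑ i : Fin (m + 1),
          gg c v (us i) * (∏ j : Fin m, ff c (vs j) (us i)) *
            (∏ k : Fin (m + 1), if k ≠ i then ff c (us i) (us k) else 1) *
            Kiz c vs (fun k => us (i.succAbove k)) := by
  obtain ⟨hV, hus, hVus⟩ := hadm.of_append_ofFn
  obtain ⟨hvs, hv⟩ := Fin.snoc_injective_iff.mp hV
  have hvu (k) : v - us k ≠ 0 ∧ v - us k + c ≠ 0 := by simpa using hVus (Fin.last m) k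
  have hvsu (t k) : vs t - us k ≠ 0 ∧ vs t - us k + c ≠ 0 := by simpa using hVus t.castSucc k
  have hinterp := Lagrange.eval_eq_sum_of_eval_eq_zero (a := vs) (b := us)
    (hvs.sumElim hus fun t k => sub_ne_zero.mp (hvsu t k).1)
    (by simpa [two_mul] using natDegree_izerginPoly_le c vs us)
    (fun t => by rw [eval_izerginPoly c vs us (hvsu t), det_izerginMatrix_snoc_self, mul_zero]) v
  have hW : ∏ k, (v - us k) * (v - us k + c) ≠ 0 :=
    prod_ne_zero_iff.mpr fun k _ => mul_ne_zero (hvu k).1 (hvu k).2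
  rw [Kiz_eq, ← mul_div_cancel_left₀ (izerginMatrix c (Fin.snoc vs v) us).det hW,
    ← eval_izerginPoly c vs us hvu, hinterp, sum_div, mul_sum]
  exact sum_congr rfl fun i _ => izergin_lagrange_term_eq hc i (fun t h => hv ⟨t, h.symm⟩)
    (fun t => sub_ne_zero.mp (hvsu t i).1) hus hvu

end Bethe
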